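/- arXiv:1410.4124 — 2 statements merged into one kernel-verified Lean document; each statement's English description precedes it below -/
import Mathlib

section
/- The function u₁ = −10γ²u₀ + (15/2)u₀², with u₀(x) = 2γ² sech²(γx) and c₀ = 4γ², c₁ = c₀², satisfies the order-ε² equation u₀'''' + u₁'' + 6u₀u₁ − c₀u₁ − c₁u₀ = 0 for all real x. -/
/-!
The leading-order profile `u₀` solves the travelling-wave equation `u₀'' = c₀ u₀ - 3 u₀²` together
with its first integral `u₀'² = c₀ u₀² - 2 u₀³`. Differentiating the first relation twice, every
derivative of `u₀` and of `u₁ = -(5/2) c₀ u₀ + (15/2) u₀²` appearing in the `O(ε²)` equation becomes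
a polynomial in `u₀` and `u₀'`; the residual is then `9 (u₀'² - c₀ u₀² + 2 u₀³) = 0`.
-/

open Real

theorem Real.one_sub_tanh_sq (x : ℝ) : 1 - tanh x ^ 2 = (1 / cosh x) ^ 2 := by
  have := (cosh_pos x).ne'
  rw [tanh_eq_sinh_div_cosh]
  field_simp
  linear_combination cosh_sq_sub_sinh_sq x

theorem Real.hasDerivAt_tanh (x : ℝ) : HasDerivAt tanh (1 - tanh x ^ 2) x := by
  have hcosh := (cosh_pos x).ne'
  rw [funext tanh_eq_sinh_div_cosh]
  refine ((hasDerivAt_sinh x).fun_div (hasDerivAt_cosh x) hcosh).congr_deriv ?_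
  field_simp

theorem hasDerivAt_tanh_mul (γ x : ℝ) :
    HasDerivAt (fun y => tanh (γ * y)) (γ * (1 - tanh (γ * x) ^ 2)) x :=
  ((hasDerivAt_tanh (γ * x)).comp x (hasDerivAt_const_mul γ)).congr_deriv (mul_comm _ _)

/-- `2γ² sech²(γx)`, the solitary wave with speed `4γ²`. -/
noncomputable def solitaryWave (γ x : ℝ) : ℝ := 2 * γ ^ 2 * (1 - tanh (γ * x) ^ 2)

noncomputable def solitaryWaveDeriv (γ x : ℝ) : ℝ :=
  -4 * γ ^ 3 * tanh (γ * x) * (1 - tanh (γ * x) ^ 2)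

section SolitaryWave

variable (γ : ℝ)

theorem hasDerivAt_solitaryWave (x : ℝ) :
    HasDerivAt (solitaryWave γ) (solitaryWaveDeriv γ x) x :=
  (((hasDerivAt_tanh_mul γ x).fun_pow 2).const_sub 1 |>.const_mul (2 * γ ^ 2)).congr_deriv <| by
    simp only [solitaryWaveDeriv]
    ring

theorem hasDerivAt_solitaryWaveDeriv (x : ℝ) :
    HasDerivAt (solitaryWaveDeriv γ)
      (4 * γ ^ 2 * solitaryWave γ x - 3 * solitaryWave γ x ^ 2) x := by
  have hT := hasDerivAt_tanh_mul γ x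
  refine ((hT.const_mul (-4 * γ ^ 3)).fun_mul ((hT.fun_pow 2).const_sub 1)).congr_deriv ?_
  simp only [solitaryWave]
  ring

theorem solitaryWaveDeriv_sq (x : ℝ) :
    solitaryWaveDeriv γ x ^ 2 = 4 * γ ^ 2 * solitaryWave γ x ^ 2 - 2 * solitaryWave γ x ^ 3 := by
  simp only [solitaryWave, solitaryWaveDeriv]
  ring

end SolitaryWave

theorem second_order_residual_eq_zero {u v u₁ : ℝ → ℝ} {c : ℝ}
    (hu : ∀ x, HasDerivAt u (v x) x)
    (hv : ∀ x, HasDerivAt v (c * u x - 3 * u x ^ 2) x)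
    (henergy : ∀ x, v x ^ 2 = c * u x ^ 2 - 2 * u x ^ 3)
    (hu₁ : ∀ x, u₁ x = -(5 / 2) * c * u x + 15 / 2 * u x ^ 2) (x : ℝ) :
    iteratedDeriv 4 u x + deriv (deriv u₁) x + 6 * u x * u₁ x - c * u₁ x - c ^ 2 * u x = 0 := by
  obtain rfl : u₁ = fun y => -(5 / 2) * c * u y + 15 / 2 * u y ^ 2 := funext hu₁
  have hu'' (y : ℝ) : HasDerivAt (fun y => c * u y - 3 * u y ^ 2) (c * v y - 6 * u y * v y) y :=
    (((hu y).const_mul c).fun_sub (((hu y).fun_pow 2).const_mul 3)).congr_deriv (by ring)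
  have hu''' : HasDerivAt (fun y => c * v y - 6 * u y * v y)
      (c * (c * u x - 3 * u x ^ 2) - 6 * (v x * v x + u x * (c * u x - 3 * u x ^ 2))) x :=
    (((hv x).const_mul c).fun_sub (((hu x).const_mul 6).fun_mul (hv x))).congr_deriv (by ring)
  have hu₁' (y : ℝ) : HasDerivAt (fun y => -(5 / 2) * c * u y + 15 / 2 * u y ^ 2)
      (-(5 / 2) * c * v y + 15 * u y * v y) y :=
    (((hu y).const_mul _).fun_add (((hu y).fun_pow 2).const_mul (15 / 2))).congr_deriv (by ring)
  have hu₁'' : HasDerivAt (fun y => -(5 / 2) * c * v y + 15 * u y * v y)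
      (-(5 / 2) * c * (c * u x - 3 * u x ^ 2) + 15 * (v x * v x + u x * (c * u x - 3 * u x ^ 2)))
      x :=
    (((hv x).const_mul _).fun_add (((hu x).const_mul 15).fun_mul (hv x))).congr_deriv (by ring)
  rw [iteratedDeriv_eq_iterate]
  simp only [Function.iterate_succ, Function.iterate_zero, Function.comp_apply, id]
  rw [funext fun y => (hu y).deriv, funext fun y => (hv y).deriv, funext fun y => (hu'' y).deriv,
    hu'''.deriv, funext fun y => (hu₁' y).deriv, hu₁''.deriv]
  linear_combination 9 * henergy x

theorem stmt6_general (γ : ℝ)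
    (u₀ u₁ : ℝ → ℝ) (c₀ c₁ : ℝ)
    (hu₀ : ∀ x, u₀ x = 2 * γ^2 * (1 / Real.cosh (γ * x))^2)
    (hc₀ : c₀ = 4 * γ^2) (hc₁ : c₁ = c₀^2)
    (hu₁ : ∀ x, u₁ x = -10 * γ^2 * u₀ x + (15/2) * (u₀ x)^2) :
    ∀ x : ℝ,
      iteratedDeriv 4 u₀ x + deriv (deriv u₁) x + 6 * u₀ x * u₁ x
        - c₀ * u₁ x - c₁ * u₀ x = 0 := by
  obtain rfl : u₀ = solitaryWave γ := funext fun x => by rw [hu₀, solitaryWave, one_sub_tanh_sq]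
  subst hc₁ hc₀
  exact second_order_residual_eq_zero (hasDerivAt_solitaryWave γ) (hasDerivAt_solitaryWaveDeriv γ)
    (solitaryWaveDeriv_sq γ) fun x => by rw [hu₁]; ring

theorem stmt6 (γ : ℝ) (hγ : γ ≠ 0)
    (u₀ u₁ : ℝ → ℝ) (c₀ c₁ : ℝ)
    (hu₀ : ∀ x, u₀ x = 2 * γ^2 * (1 / Real.cosh (γ * x))^2)
    (hc₀ : c₀ = 4 * γ^2) (hc₁ : c₁ = c₀^2)
    (hu₁ : ∀ x, u₁ x = -10 * γ^2 * u₀ x + (15/2) * (u₀ x)^2) :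
    ∀ x : ℝ,
      iteratedDeriv 4 u₀ x + deriv (deriv u₁) x + 6 * u₀ x * u₁ x
        - c₀ * u₁ x - c₁ * u₀ x = 0 :=
  stmt6_general γ u₀ u₁ c₀ c₁ hu₀ hc₀ hc₁ hu₁
end

section
/- With N = r/(2ε) and |χ| = r, the truncation term ε^{2N}Γ(2N+γ)/|χ|^{2N+γ} is exponentially small: using Stirling's formula, ε^{2N}Γ(2N+γ)/r^{2N+γ} ~ √(2π)(r/ε)^{γ−1/2} r^{−γ} e^{−r/ε} as ε → 0⁺ along values with r/(2ε) a positive integer. -/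
open Real Filter

open Asymptotics Finset

/-!
Put m = r/ε = 2(n+1). The quotient is then Γ(m+γ) / (√(2π) m^(m+γ-1/2) e^(-m)), so the claim is
Stirling's formula for Γ along the integers shifted by a fixed real γ. That follows from
Stirling's formula for n! and Wendel's limit Γ(n+a) ~ n^a Γ(n). Wendel's limit holds for a > 1
by Euler's limit formula for Γ, and descends from a+1 to a through Γ(s+1) = s Γ(s).
-/

namespace Real

theorem Gamma_add_nat_eq_mul_prod {x : ℝ} (hx : 0 < x) (n : ℕ) :
    Gamma (x + n) = Gamma x * ∏ j ∈ range n, (x + j) := by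
  induction n with
  | zero => simp
  | succ n ih =>
    rw [Nat.cast_succ, ← add_assoc, Gamma_add_one (by positivity), ih, prod_range_succ]
    ring

theorem Gamma_nat_add_isEquivalent_of_one_lt {a : ℝ} (ha : 1 < a) :
    (fun n : ℕ => Gamma (n + a)) ~[atTop] fun n => (n : ℝ) ^ a * Gamma n := by
  set x := a - 1
  have hx : 0 < x := sub_pos.2 ha
  set P : ℕ → ℝ := fun n => ∏ j ∈ range (n + 1), (x + j)
  have hseq : GammaSeq x ~[atTop] fun _ => Gamma x :=
    (isEquivalent_const_iff_tendsto (Gamma_pos_of_pos hx).ne').2 (GammaSeq_tendsto_Gamma x)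
  refine ((hseq.mul (IsEquivalent.refl (u := P))).symm.congr_left ?_).congr_right ?_
  · refine Eventually.of_forall fun n => ?_
    simp only [Pi.mul_apply, P]
    rw [← Gamma_add_nat_eq_mul_prod hx]
    push_cast
    congr 1
    ring
  · filter_upwards [eventually_gt_atTop 0] with n hn
    have hn' : (n : ℝ) ≠ 0 := by positivity
    simp only [Pi.mul_apply, P, GammaSeq]
    have hP : ∏ j ∈ range (n + 1), (x + j) ≠ 0 :=
      prod_ne_zero_iff.2 fun j _ => by positivity
    rw [div_mul_cancel₀ _ hP, ← Gamma_nat_eq_factorial, Gamma_add_one hn',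
      show a = x + 1 by ring, rpow_add_one hn']
    ring

theorem Gamma_nat_add_isEquivalent_of_add_one {a : ℝ}
    (h : (fun n : ℕ => Gamma (n + (a + 1))) ~[atTop] fun n => (n : ℝ) ^ (a + 1) * Gamma n) :
    (fun n : ℕ => Gamma (n + a)) ~[atTop] fun n => (n : ℝ) ^ a * Gamma n := by
  have hlin : (fun n : ℕ => (n : ℝ) + a) ~[atTop] fun n => (n : ℝ) :=
    IsEquivalent.refl.add_const_of_norm_tendsto_atTop
      (tendsto_norm_atTop_atTop.comp tendsto_natCast_atTop_atTop)
  refine ((h.div hlin).congr_left ?_).congr_right ?_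
  · filter_upwards [eventually_gt_atTop ⌈-a⌉₊] with n hn
    have hna : (n : ℝ) + a ≠ 0 := by
      have := Nat.lt_of_ceil_lt hn
      linarith
    simp only [Pi.div_apply]
    rw [← add_assoc, Gamma_add_one hna, mul_div_cancel_left₀ _ hna]
  · filter_upwards [eventually_gt_atTop 0] with n hn
    have hn' : (n : ℝ) ≠ 0 := by positivity
    simp only [Pi.div_apply]
    rw [rpow_add_one hn']
    field_simp

theorem Gamma_nat_add_isEquivalent (a : ℝ) :
    (fun n : ℕ => Gamma (n + a)) ~[atTop] fun n => (n : ℝ) ^ a * Gamma n := by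
  obtain ⟨j, hj⟩ := exists_nat_gt (1 - a)
  induction j generalizing a with
  | zero => exact Gamma_nat_add_isEquivalent_of_one_lt (by simp at hj; linarith)
  | succ j ih =>
    exact Gamma_nat_add_isEquivalent_of_add_one (ih (a + 1) (by push_cast at hj; linarith))

theorem Gamma_nat_add_isEquivalent_stirling (a : ℝ) :
    (fun n : ℕ => Gamma (n + a)) ~[atTop]
      fun n => √(2 * π) * (n : ℝ) ^ ((n : ℝ) + a - 1 / 2) * exp (-n) := by
  refine (Gamma_nat_add_isEquivalent a).trans ?_
  have hstirling := (IsEquivalent.refl (u := fun n : ℕ => (n : ℝ) ^ (a - 1))).mul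
    Stirling.factorial_isEquivalent_stirling
  refine (hstirling.congr_left ?_).congr_right ?_
  · filter_upwards [eventually_gt_atTop 0] with n hn
    have hn' : (n : ℝ) ≠ 0 := by positivity
    simp only [Pi.mul_apply]
    rw [← Gamma_nat_eq_factorial, Gamma_add_one hn', ← mul_assoc, ← rpow_add_one hn']
    ring_nf
  · filter_upwards [eventually_gt_atTop 0] with n hn
    have hn' : (0 : ℝ) < n := by positivity
    simp only [Pi.mul_apply]
    have hsqrt : √(2 * n * π) = √(2 * π) * √n := by
      rw [← sqrt_mul (by positivity)]
      ring_nf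
    rw [hsqrt, div_pow, ← exp_nat_mul, exp_neg,
      show (n : ℝ) + a - 1 / 2 = (a - 1) + (1 / 2 + n) by ring, rpow_add hn', rpow_add hn',
      rpow_natCast, ← sqrt_eq_rpow, mul_one]
    field_simp

end Real

theorem truncation_ratio_eq_Gamma_div_stirling {r m : ℝ} (hr : 0 < r) (hm : 0 < m) (γ : ℝ) :
    (r / m) ^ m * Gamma (m + γ) / r ^ (m + γ) /
        (√(2 * π) * m ^ (γ - 1 / 2) * r ^ (-γ) * exp (-m)) =
      Gamma (m + γ) / (√(2 * π) * m ^ (m + γ - 1 / 2) * exp (-m)) := by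
  rw [div_rpow hr.le hm.le, rpow_add hr, rpow_neg hr.le,
    show m + γ - 1 / 2 = m + (γ - 1 / 2) by ring, rpow_add hm]
  have : r ^ m ≠ 0 := by positivity
  have : r ^ γ ≠ 0 := by positivity
  field_simp

theorem stmt8 (r γ : ℝ) (hr : 0 < r) :
    Filter.Tendsto
      (fun n : ℕ =>
        (let ε := r / (2 * (n + 1 : ℝ));
          (ε ^ (r / ε) * Real.Gamma (r / ε + γ) / r ^ (r / ε + γ)) /
          (Real.sqrt (2 * Real.pi) * (r / ε) ^ (γ - 1/2) * r ^ (-γ) *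
            Real.exp (-(r / ε)))))
      Filter.atTop (nhds 1) := by
  have hstirling := (isEquivalent_iff_tendsto_one
    ((eventually_gt_atTop 0).mono fun n hn => by positivity)).1
    (Real.Gamma_nat_add_isEquivalent_stirling γ)
  have hm : Tendsto (fun n : ℕ => 2 * n + 2) atTop atTop :=
    tendsto_atTop_mono (fun n => by dsimp; omega) tendsto_id
  refine (hstirling.comp hm).congr fun n => ?_
  have hm0 : (0 : ℝ) < 2 * (n + 1) := by positivity
  dsimp only [Function.comp, Pi.div_apply]
  rw [div_div_cancel₀ hr.ne', truncation_ratio_eq_Gamma_div_stirling hr hm0]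
  push_cast
  ring_nf
end
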